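/- arXiv:1402.4798 — 2 statements merged into one kernel-verified Lean document; each statement's English description precedes it below -/
import Mathlib

section
/- Let s and n be real numbers with 2 < s < n. Then there exists λ > 0 such that for every k ∈ ℕ one has 0 < U_k(s) and U_k(s)/U_k(n) ≤ e^{−λk}. -/
/-!
For `x ≥ 2` the values `U_k(x)` are positive and nondecreasing in `k`. Comparing the recurrences
at `s ≤ n` gives the cross inequality `n U_{k+1}(s) U_k(n) ≤ s U_{k+1}(n) U_k(s)`, i.e. the ratio
`U_k(s) / U_k(n)` shrinks by at least the factor `s / n` at every step. Hence it is at most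
`(s / n)^k = exp (-k log (n / s))`.
-/

/-- The dilated Chebyshev polynomials of the second kind:
`U 0 = 1`, `U 1 = X`, `U (k+2) = X * U (k+1) - U k`. -/
noncomputable def dilChebU : ℕ → Polynomial ℝ
  | 0 => 1
  | 1 => Polynomial.X
  | (k + 2) => Polynomial.X * dilChebU (k + 1) - dilChebU k

namespace DilChebU

open Polynomial

lemma eval_add_two (k : ℕ) (x : ℝ) :
    (dilChebU (k + 2)).eval x = x * (dilChebU (k + 1)).eval x - (dilChebU k).eval x := by
  simp [dilChebU]

section

variable {x : ℝ} (hx : 2 ≤ x)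
include hx

lemma eval_pos_and_le_succ (k : ℕ) :
    0 < (dilChebU k).eval x ∧ (dilChebU k).eval x ≤ (dilChebU (k + 1)).eval x := by
  induction k with
  | zero => simp only [dilChebU, eval_one, eval_X]; constructor <;> linarith
  | succ k ih =>
    obtain ⟨hpos, hle⟩ := ih
    refine ⟨hpos.trans_le hle, ?_⟩
    rw [eval_add_two]
    nlinarith

lemma eval_pos (k : ℕ) : 0 < (dilChebU k).eval x :=
  (eval_pos_and_le_succ hx k).1

end

section

variable {s n : ℝ} (hs : 2 ≤ s) (hsn : s ≤ n)
include hs hsn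

lemma mul_eval_succ_mul_eval_le (k : ℕ) :
    n * (dilChebU (k + 1)).eval s * (dilChebU k).eval n ≤
      s * (dilChebU (k + 1)).eval n * (dilChebU k).eval s := by
  induction k with
  | zero => simp only [dilChebU, eval_one, eval_X]; linarith
  | succ k ih =>
    have hn : 2 ≤ n := hs.trans hsn
    have key : s * (dilChebU (k + 1)).eval s * (dilChebU k).eval n ≤
        n * (dilChebU (k + 1)).eval n * (dilChebU k).eval s :=
      calc s * (dilChebU (k + 1)).eval s * (dilChebU k).eval n
          ≤ n * (dilChebU (k + 1)).eval s * (dilChebU k).eval n := by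
            gcongr
            · exact (eval_pos hn k).le
            · exact (eval_pos hs (k + 1)).le
        _ ≤ s * (dilChebU (k + 1)).eval n * (dilChebU k).eval s := ih
        _ ≤ n * (dilChebU (k + 1)).eval n * (dilChebU k).eval s := by
            gcongr
            · exact (eval_pos hs k).le
            · exact (eval_pos hn (k + 1)).le
    rw [eval_add_two, eval_add_two]
    linarith

lemma eval_ratio_succ_le (k : ℕ) :
    (dilChebU (k + 1)).eval s / (dilChebU (k + 1)).eval n ≤
      s / n * ((dilChebU k).eval s / (dilChebU k).eval n) := by
  have hn : 2 ≤ n := hs.trans hsn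
  have := eval_pos hn k
  have := eval_pos hn (k + 1)
  rw [div_mul_div_comm, div_le_div_iff₀ (by positivity) (by positivity)]
  linarith [mul_eval_succ_mul_eval_le hs hsn k]

lemma eval_ratio_le_pow (k : ℕ) :
    (dilChebU k).eval s / (dilChebU k).eval n ≤ (s / n) ^ k := by
  induction k with
  | zero => simp [dilChebU]
  | succ k ih =>
    have : 0 ≤ s / n := div_nonneg (by linarith) (by linarith)
    calc (dilChebU (k + 1)).eval s / (dilChebU (k + 1)).eval n
        ≤ s / n * ((dilChebU k).eval s / (dilChebU k).eval n) := eval_ratio_succ_le hs hsn k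
      _ ≤ s / n * (s / n) ^ k := by gcongr
      _ = (s / n) ^ (k + 1) := (pow_succ' _ _).symm

end

end DilChebU

theorem dilChebU_ratio_exp_decay (s n : ℝ) (hs : 2 < s) (hsn : s < n) :
    ∃ lam : ℝ, 0 < lam ∧
      ∀ k : ℕ, 0 < (dilChebU k).eval s ∧
        (dilChebU k).eval s / (dilChebU k).eval n ≤ Real.exp (-(lam * k)) := by
  have hs0 : 0 < s := by linarith
  have hns : 0 < n / s := div_pos (hs0.trans hsn) hs0
  refine ⟨Real.log (n / s), Real.log_pos ((one_lt_div hs0).2 hsn), fun k => ⟨?_, ?_⟩⟩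
  · exact DilChebU.eval_pos hs.le k
  · have hexp : Real.exp (-(Real.log (n / s) * k)) = (s / n) ^ k := by
      rw [Real.exp_neg, mul_comm, Real.exp_nat_mul, Real.exp_log hns, ← inv_pow, inv_div]
    rw [hexp]
    exact DilChebU.eval_ratio_le_pow hs.le hsn.le k
end

section
/- Let n be a real number with n > 2 and let q = (n − √(n²−4))/2, the smallest root of X² − nX + 1 (so 0 < q < 1). Then, denoting by U_r′ the derivative of the polynomial U_r, the sequence r ↦ U_r′(n)/U_r(n) − r/√(n²−4) converges as r → ∞ to 2q²/((q² − 1)·√(n²−4)). In particular, U_r′(n)/U_r(n) = r/√(n²−4) + O(1) as r → ∞, and U_r′(n)/U_r(n) → +∞. -/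
/-!
Write `n = p + q` with `p q = 1` and `|q| < 1 < |p|`. The recurrence is solved by
`U_r(p + q) = (p^(r+1) - q^(r+1)) / (p - q)`, and differentiating the recurrence gives a similar
closed form for `U_r'(p + q)`. Their quotient is `r / (p - q) - 2 q / (p - q)^2` up to an error
of order `r q^(2r)`, which tends to zero.
-/

open Polynomial Filter Topology

theorem dilChebU_add_two (k : ℕ) : dilChebU (k + 2) = X * dilChebU (k + 1) - dilChebU k := rfl

section ClosedForms

variable {p q : ℝ}

theorem sub_ne_zero_of_mul_eq_one_of_sq_lt_one (hpq : p * q = 1) (hq : q ^ 2 < 1) :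
    p - q ≠ 0 := by
  rw [sub_ne_zero]
  rintro rfl
  nlinarith

theorem dilChebU_eval_add_mul_sub (hpq : p * q = 1) (r : ℕ) :
    (dilChebU r).eval (p + q) * (p - q) = p ^ (r + 1) - q ^ (r + 1) := by
  induction r using Nat.twoStepInduction with
  | zero => simp [dilChebU]
  | one => simp only [dilChebU, eval_X]; ring
  | more k h₀ h₁ =>
    simp only [dilChebU_add_two, eval_sub, eval_mul, eval_X]
    linear_combination (p + q) * h₁ - h₀ + (p ^ (k + 1) - q ^ (k + 1)) * hpq

theorem dilChebU_derivative_eval_add_mul_sub_pow_three (hpq : p * q = 1) (r : ℕ) :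
    (dilChebU r).derivative.eval (p + q) * (p - q) ^ 3
      = (r + 1) * (p ^ (r + 1) + q ^ (r + 1)) * (p - q)
        - (p + q) * (p ^ (r + 1) - q ^ (r + 1)) := by
  induction r using Nat.twoStepInduction with
  | zero => simp [dilChebU]
  | one => simp only [dilChebU, derivative_X, eval_one, Nat.cast_one]; ring
  | more k h₀ h₁ =>
    have e := dilChebU_eval_add_mul_sub hpq (k + 1)
    simp only [dilChebU_add_two, derivative_sub, derivative_mul, derivative_X, one_mul, eval_sub,
      eval_add, eval_mul, eval_X]
    push_cast at h₀ h₁ ⊢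
    linear_combination (p - q) ^ 2 * e + (p + q) * h₁ - h₀
      + ((-2 * p + (k + 2) * (p - q)) * p ^ (k + 1)
        + (2 * q + (k + 2) * (p - q)) * q ^ (k + 1)) * hpq

theorem dilChebU_logDeriv_sub_eq (hpq : p * q = 1) (hq : q ^ 2 < 1) (r : ℕ) :
    (dilChebU r).derivative.eval (p + q) / (dilChebU r).eval (p + q) - r / (p - q)
      = -2 * q / (p - q) ^ 2
        + 2 * (r + 1) * (q ^ 2) ^ (r + 1) / ((p - q) * (1 - (q ^ 2) ^ (r + 1))) := by
  have hpq_sub := sub_ne_zero_of_mul_eq_one_of_sq_lt_one hpq hq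
  have hab : p ^ (r + 1) * q ^ (r + 1) = 1 := by rw [← mul_pow, hpq, one_pow]
  have h1 : 1 - (q ^ 2) ^ (r + 1) = q ^ (r + 1) * (p ^ (r + 1) - q ^ (r + 1)) := by
    linear_combination -hab
  have h1_ne : q ^ (r + 1) * (p ^ (r + 1) - q ^ (r + 1)) ≠ 0 :=
    h1 ▸ (sub_pos.2 (pow_lt_one₀ (sq_nonneg q) hq r.succ_ne_zero)).ne'
  have hq_pow := left_ne_zero_of_mul h1_ne
  have hab_sub := right_ne_zero_of_mul h1_ne
  rw [eq_div_of_mul_eq hpq_sub (dilChebU_eval_add_mul_sub hpq r),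
    eq_div_of_mul_eq (pow_ne_zero 3 hpq_sub) (dilChebU_derivative_eval_add_mul_sub_pow_three hpq r),
    h1]
  field_simp
  ring

theorem tendsto_dilChebU_logDeriv_sub (hpq : p * q = 1) (hq : q ^ 2 < 1) :
    Tendsto (fun r : ℕ =>
        (dilChebU r).derivative.eval (p + q) / (dilChebU r).eval (p + q) - r / (p - q))
      atTop (𝓝 (-2 * q / (p - q) ^ 2)) := by
  have hpq_sub := sub_ne_zero_of_mul_eq_one_of_sq_lt_one hpq hq
  have hQ : Tendsto (fun r : ℕ => (q ^ 2) ^ (r + 1)) atTop (𝓝 0) :=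
    (tendsto_pow_atTop_nhds_zero_of_lt_one (sq_nonneg q) hq).comp (tendsto_add_atTop_nat 1)
  have hrQ : Tendsto (fun r : ℕ => ((r : ℝ) + 1) * (q ^ 2) ^ (r + 1)) atTop (𝓝 0) := by
    have := (tendsto_self_mul_const_pow_of_lt_one (sq_nonneg q) hq).comp (tendsto_add_atTop_nat 1)
    simpa [Function.comp_def] using this
  have herr : Tendsto
      (fun r : ℕ => 2 * (r + 1) * (q ^ 2) ^ (r + 1) / ((p - q) * (1 - (q ^ 2) ^ (r + 1))))
      atTop (𝓝 0) := by
    simpa [Pi.div_def, mul_assoc] using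
      (hrQ.const_mul 2).div ((tendsto_const_nhds.sub hQ).const_mul (p - q)) (by simpa using hpq_sub)
  simpa only [dilChebU_logDeriv_sub_eq hpq hq, add_zero] using herr.const_add (-2 * q / (p - q) ^ 2)

end ClosedForms

theorem dilChebU_log_derivative_asymptotics (n : ℝ) (hn : 2 < n)
    (q : ℝ) (hq : q = (n - Real.sqrt (n ^ 2 - 4)) / 2) :
    Filter.Tendsto
        (fun r : ℕ =>
          ((dilChebU r).derivative.eval n) / ((dilChebU r).eval n)
            - (r : ℝ) / Real.sqrt (n ^ 2 - 4))
        Filter.atTop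
        (nhds (2 * q ^ 2 / ((q ^ 2 - 1) * Real.sqrt (n ^ 2 - 4)))) ∧
    (∃ C : ℝ, ∀ r : ℕ,
      |((dilChebU r).derivative.eval n) / ((dilChebU r).eval n)
          - (r : ℝ) / Real.sqrt (n ^ 2 - 4)| ≤ C) ∧
    Filter.Tendsto
      (fun r : ℕ => ((dilChebU r).derivative.eval n) / ((dilChebU r).eval n))
      Filter.atTop Filter.atTop := by
  set s := Real.sqrt (n ^ 2 - 4)
  have hs2 : s ^ 2 = n ^ 2 - 4 := Real.sq_sqrt (by nlinarith)
  have hs : 0 < s := Real.sqrt_pos.mpr (by nlinarith)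
  set p := (n + s) / 2
  have hsum : p + q = n := by rw [hq]; ring
  have hdiff : p - q = s := by rw [hq]; ring
  have hpq : p * q = 1 := by rw [hq]; linear_combination -hs2 / 4
  have hq0 : 0 < q := by rw [hq]; nlinarith
  have hlim : 2 * q ^ 2 / ((q ^ 2 - 1) * s) = -2 * q / s ^ 2 := by
    rw [div_eq_div_iff (mul_ne_zero (by nlinarith) hs.ne') (by positivity)]
    linear_combination (-2 * q ^ 2 * s) * hdiff + (2 * q * s) * hpq
  have hmain := tendsto_dilChebU_logDeriv_sub hpq (by nlinarith)
  rw [hsum, hdiff, ← hlim] at hmain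
  refine ⟨hmain, ?_, ?_⟩
  · obtain ⟨C, hC⟩ := hmain.abs.bddAbove_range
    exact ⟨C, fun r => hC ⟨r, rfl⟩⟩
  · refine (hmain.add_atTop (tendsto_natCast_atTop_atTop.atTop_div_const hs)).congr fun r => ?_
    ring
end
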